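/- For Δ > 1/2, the superlacunary function s(t) = Σ_{k=1}^∞ k^{−2Δ}·exp(i·2^{2^k}·t) satisfies the lower bound: there exists C₃ > 0 such that ω[s](δ) ≥ C₃·(ln|ln δ|)^{−2Δ} for all δ ∈ (0, e^{−e}). -/

import Mathlib

open Complex Real

/-- The superlacunary function `s(t) = Σ_{k=1}^∞ k^{-2Δ} exp(i 2^{2^k} t)`. -/
noncomputable def superlacFun (Δ : ℝ) (t : ℝ) : ℂ :=
  ∑' k : ℕ, (((k : ℝ) + 1) ^ (-(2 * Δ)) : ℝ) *
    Complex.exp (Complex.I * (2 : ℂ) ^ (2 ^ (k + 1)) * (t : ℂ))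

/-- Modulus of continuity of a complex-valued function on ℝ. -/
noncomputable def modCont (f : ℝ → ℂ) (δ : ℝ) : ℝ :=
  sSup {y : ℝ | ∃ t h : ℝ, |h| ≤ δ ∧ y = ‖f (t + h) - f t‖}

/-!
Integrating the increment `s(t + h) - s(t)` against `e^{-i ν_k t}` over a period isolates its
`k`-th coefficient `a_k (e^{i ν_k h} - 1)`, so `ω[s](δ) ≥ |a_k| |e^{i ν_k h} - 1|` whenever
`|h| ≤ δ`; the shift `h = π / ν_k` gives `ω[s](δ) ≥ 2 |a_k|`. For the frequencies
`ν_k = 2^{2^{k+1}}` an index with `π / ν_k ≤ δ` can be found already at `k + 1 ≤ 5 ln |ln δ|`,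
which yields the bound with `C₃ = 2 · 5^{-2Δ}`.
-/

noncomputable def trigSeries {ι : Type*} (a : ι → ℂ) (ν : ι → ℤ) (t : ℝ) : ℂ :=
  ∑' j, a j * cexp (I * ν j * t)

lemma norm_exp_I_int_mul (n : ℤ) (t : ℝ) : ‖cexp (I * n * t)‖ = 1 := by
  simpa [mul_assoc] using norm_exp_I_mul_ofReal (n * t)

lemma integral_exp_I_int_mul (n : ℤ) :
    ∫ t in (0 : ℝ)..2 * π, cexp (I * n * t) = if n = 0 then (2 * π : ℂ) else 0 := by
  split_ifs with hn
  · simp [hn]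
  · have hc : I * (n : ℂ) ≠ 0 := mul_ne_zero I_ne_zero (Int.cast_ne_zero.mpr hn)
    have hperiod : I * n * ((2 * π : ℝ) : ℂ) = n * (2 * π * I) := by push_cast; ring
    rw [integral_exp_mul_complex hc, hperiod, exp_int_mul_two_pi_mul_I]
    simp

lemma norm_sub_le_modCont {f : ℝ → ℂ} (hf : BddAbove (Set.range fun t => ‖f t‖)) {δ h : ℝ}
    (hh : |h| ≤ δ) (t : ℝ) : ‖f (t + h) - f t‖ ≤ modCont f δ := by
  obtain ⟨M, hM⟩ := hf
  refine le_csSup ⟨M + M, ?_⟩ ⟨t, h, hh, rfl⟩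
  rintro _ ⟨s, h', -, rfl⟩
  exact (norm_sub_le _ _).trans (add_le_add (hM ⟨_, rfl⟩) (hM ⟨_, rfl⟩))

namespace trigSeries

variable {ι : Type*} {a : ι → ℂ} {ν : ι → ℤ}

lemma summable (ha : Summable (‖a ·‖)) (t : ℝ) :
    Summable fun j => a j * cexp (I * ν j * t) :=
  ha.of_norm_bounded fun j => by simp [norm_exp_I_int_mul]

lemma norm_le (ha : Summable (‖a ·‖)) (t : ℝ) : ‖trigSeries a ν t‖ ≤ ∑' j, ‖a j‖ :=
  (norm_tsum_le_tsum_norm (ha.congr fun j => by simp [norm_exp_I_int_mul])).trans_eq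
    (tsum_congr fun j => by simp [norm_exp_I_int_mul])

lemma add_sub (ha : Summable (‖a ·‖)) (t h : ℝ) :
    trigSeries a ν (t + h) - trigSeries a ν t =
      trigSeries (fun j => a j * (cexp (I * ν j * h) - 1)) ν t := by
  rw [trigSeries, trigSeries, ← (summable ha _).tsum_sub (summable ha _), trigSeries]
  refine tsum_congr fun j => ?_
  rw [ofReal_add, mul_add, Complex.exp_add]
  ring

variable [Countable ι]

lemma integral_mul_exp_neg (ha : Summable (‖a ·‖)) (hν : Function.Injective ν) (k : ι) :
    ∫ t in (0 : ℝ)..2 * π, trigSeries a ν t * cexp (-(I * ν k * t)) = 2 * π * a k := by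
  classical
  have hterm : ∀ j (t : ℝ), a j * cexp (I * ν j * t) * cexp (-(I * ν k * t)) =
      a j * cexp (I * ((ν j - ν k : ℤ) : ℂ) * t) := fun j t => by
    rw [mul_assoc, ← Complex.exp_add]; push_cast; ring_nf
  have hcoef : ∀ j, ∫ t in (0 : ℝ)..2 * π, a j * cexp (I * ((ν j - ν k : ℤ) : ℂ) * t) =
      if j = k then 2 * π * a k else 0 := fun j => by
    rw [intervalIntegral.integral_const_mul, integral_exp_I_int_mul]
    by_cases hj : j = k
    · simp [hj, mul_comm]
    · simp [hj, sub_eq_zero, hν.ne hj]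
  have hsum := intervalIntegral.hasSum_integral_of_dominated_convergence
    (F := fun j t => a j * cexp (I * ((ν j - ν k : ℤ) : ℂ) * t))
    (f := fun t => trigSeries a ν t * cexp (-(I * ν k * t)))
    (μ := MeasureTheory.volume) (a := 0) (b := 2 * π) (fun j _ => ‖a j‖)
    (fun j => by fun_prop)
    (fun j => .of_forall fun t _ => by rw [norm_mul, norm_exp_I_int_mul, mul_one])
    (.of_forall fun _ _ => ha) intervalIntegrable_const
    (.of_forall fun t _ => by
      have := (summable (ν := ν) ha t).hasSum.mul_right (cexp (-(I * ν k * t)))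
      simp only [hterm] at this
      exact this)
  simp only [hcoef] at hsum
  exact hsum.unique (hasSum_ite_eq k _)

lemma norm_coeff_le_of_forall_norm_le (ha : Summable (‖a ·‖)) (hν : Function.Injective ν)
    {M : ℝ} (hM : ∀ t, ‖trigSeries a ν t‖ ≤ M) (k : ι) : ‖a k‖ ≤ M := by
  have hint := intervalIntegral.norm_integral_le_of_norm_le_const (a := 0) (b := 2 * π)
    (f := fun t => trigSeries a ν t * cexp (-(I * ν k * t))) (C := M) fun t _ => by
      rw [norm_mul, Complex.norm_exp]
      simpa using hM t
  have hnorm : ‖(2 * π : ℂ)‖ = 2 * π := by simpa using (abs_of_pos two_pi_pos : _)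
  rw [integral_mul_exp_neg ha hν k, norm_mul, hnorm, sub_zero, abs_of_pos two_pi_pos,
    mul_comm M] at hint
  exact le_of_mul_le_mul_left hint two_pi_pos

lemma norm_coeff_mul_le_modCont (ha : Summable (‖a ·‖)) (hν : Function.Injective ν) {δ h : ℝ}
    (hh : |h| ≤ δ) (k : ι) : ‖a k‖ * ‖cexp (I * ν k * h) - 1‖ ≤ modCont (trigSeries a ν) δ := by
  have hexp_sub_one : ∀ j, ‖cexp (I * ν j * h) - 1‖ ≤ 2 := fun j =>
    (norm_sub_le _ _).trans (by simp [norm_exp_I_int_mul]; norm_num)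
  have hb : Summable fun j => ‖a j * (cexp (I * ν j * h) - 1)‖ :=
    (ha.mul_right 2).of_nonneg_of_le (fun j => norm_nonneg _) fun j => by
      rw [norm_mul]; exact mul_le_mul_of_nonneg_left (hexp_sub_one j) (norm_nonneg _)
  have hbdd : BddAbove (Set.range fun t => ‖trigSeries a ν t‖) :=
    ⟨∑' j, ‖a j‖, by rintro _ ⟨t, rfl⟩; exact norm_le ha t⟩
  rw [← norm_mul]
  exact norm_coeff_le_of_forall_norm_le hb hν
    (fun t => add_sub ha t h ▸ norm_sub_le_modCont hbdd hh t) k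

lemma two_mul_norm_coeff_le_modCont (ha : Summable (‖a ·‖)) (hν : Function.Injective ν) {k : ι}
    (hk : 0 < ν k) {δ : ℝ} (hδ : π / ν k ≤ δ) : 2 * ‖a k‖ ≤ modCont (trigSeries a ν) δ := by
  have hνk : (ν k : ℂ) ≠ 0 := by exact_mod_cast hk.ne'
  have hhalf : cexp (I * ν k * (π / ν k : ℝ)) = -1 := by
    rw [← exp_pi_mul_I]; push_cast; field_simp
  have hδ' : |π / ν k| ≤ δ := by rwa [abs_of_pos (by positivity)]
  have := norm_coeff_mul_le_modCont ha hν hδ' k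
  rw [hhalf] at this
  norm_num at this
  linarith

end trigSeries

lemma superlacFun_eq_trigSeries (Δ : ℝ) :
    superlacFun Δ = trigSeries (fun k : ℕ => ((((k : ℝ) + 1) ^ (-(2 * Δ)) : ℝ) : ℂ))
      (fun k => 2 ^ 2 ^ (k + 1)) := by
  ext t
  simp only [superlacFun, trigSeries]
  push_cast
  rfl

lemma summable_norm_superlacCoeff {Δ : ℝ} (hΔ : 1 / 2 < Δ) :
    Summable fun k : ℕ => ‖((((k : ℝ) + 1) ^ (-(2 * Δ)) : ℝ) : ℂ)‖ := by
  have h := (summable_nat_add_iff 1).mpr (Real.summable_nat_rpow.mpr (by linarith : -(2 * Δ) < -1))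
  refine h.congr fun k => ?_
  rw [norm_real, Real.norm_of_nonneg (by positivity)]
  push_cast
  rfl

lemma strictMono_two_pow_two_pow_succ : StrictMono fun k : ℕ => (2 : ℤ) ^ 2 ^ (k + 1) :=
  (pow_right_strictMono₀ one_lt_two).comp
    ((pow_right_strictMono₀ one_lt_two).comp (strictMono_id.add_const 1))

lemma pi_div_two_pow_two_pow_le {L : ℝ} {m : ℕ} (hL : 1 ≤ L) (hm : 4 * L ≤ 2 ^ m) :
    π / 2 ^ 2 ^ m ≤ rexp (-L) := by
  have hlog2 := Real.log_two_gt_d9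
  have hpow : (2 : ℝ) ^ 2 ^ m = rexp (Real.log 2 * 2 ^ m) := by
    rw [← Real.rpow_def_of_pos two_pos]; norm_cast
  have hexponent : Real.log 2 + Real.log 2 ≤ Real.log 2 * 2 ^ m - L := by
    nlinarith [mul_le_mul_of_nonneg_left hm (Real.log_nonneg one_le_two),
      mul_nonneg (sub_nonneg.mpr hL) (by linarith : (0 : ℝ) ≤ 4 * Real.log 2 - 1)]
  rw [div_le_iff₀ (by positivity)]
  calc π ≤ 4 := pi_le_four
    _ = rexp (Real.log 2 + Real.log 2) := by rw [Real.exp_add, Real.exp_log two_pos]; norm_num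
    _ ≤ rexp (Real.log 2 * 2 ^ m - L) := Real.exp_le_exp.mpr hexponent
    _ = rexp (-L) * 2 ^ 2 ^ m := by rw [hpow, ← Real.exp_add]; ring_nf

lemma exists_four_mul_le_two_pow_succ {L : ℝ} (hL : rexp 1 ≤ L) :
    ∃ k : ℕ, 4 * L ≤ 2 ^ (k + 1) ∧ (k : ℝ) + 1 ≤ 5 * Real.log L := by
  have hL0 : 0 < L := (Real.exp_pos 1).trans_le hL
  have hℓ : 1 ≤ Real.log L := by simpa using Real.log_le_log (Real.exp_pos 1) hL
  have hlog2 := Real.log_two_gt_d9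
  have hceil := Nat.le_ceil (2 * Real.log L)
  have hceil' := Nat.ceil_lt_add_one (by positivity : (0 : ℝ) ≤ 2 * Real.log L)
  refine ⟨⌈2 * Real.log L⌉₊ + 1, ?_, by push_cast; linarith⟩
  have hpow : (2 : ℝ) ^ (⌈2 * Real.log L⌉₊ + 1 + 1) =
      rexp (Real.log 2 * (⌈2 * Real.log L⌉₊ + 2)) := by
    rw [← Real.rpow_def_of_pos two_pos]; norm_cast
  rw [hpow, ← Real.log_le_iff_le_exp (by positivity), Real.log_mul four_ne_zero hL0.ne',
    show (4 : ℝ) = 2 * 2 by norm_num, Real.log_mul two_ne_zero two_ne_zero]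
  nlinarith

/-- Example 2.2, lower bound:
`ω[s](δ) ≥ C₃ (ln |ln δ|)^{-2Δ}` for `0 < δ < e^{-e}`. -/
theorem superlacFun_modCont_lower (Δ : ℝ) (hΔ : 1 / 2 < Δ) :
    ∃ C₃ : ℝ, 0 < C₃ ∧ ∀ δ : ℝ, δ ∈ Set.Ioo (0 : ℝ) (Real.exp (-(Real.exp 1))) →
      C₃ * Real.log |Real.log δ| ^ (-(2 * Δ)) ≤ modCont (superlacFun Δ) δ := by
  refine ⟨2 * 5 ^ (-(2 * Δ)), by positivity, fun δ ⟨hδ0, hδ⟩ => ?_⟩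
  have hlogδ : Real.log δ < -rexp 1 := by simpa using Real.log_lt_log hδ0 hδ
  have habs : |Real.log δ| = -Real.log δ := abs_of_neg (by linarith [Real.exp_pos 1])
  have hL : rexp 1 ≤ |Real.log δ| := by linarith
  obtain ⟨k, hk4, hk⟩ := exists_four_mul_le_two_pow_succ hL
  have hkδ : π / ((2 ^ 2 ^ (k + 1) : ℤ) : ℝ) ≤ δ := by
    have := pi_div_two_pow_two_pow_le (by linarith [Real.add_one_le_exp 1]) hk4
    rw [habs, neg_neg, Real.exp_log hδ0] at this
    exact_mod_cast this
  rw [superlacFun_eq_trigSeries]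
  refine le_trans ?_ (trigSeries.two_mul_norm_coeff_le_modCont (summable_norm_superlacCoeff hΔ)
    strictMono_two_pow_two_pow_succ.injective (by positivity) hkδ)
  have hℓ : 0 < Real.log |Real.log δ| := by linarith
  rw [norm_real, Real.norm_of_nonneg (by positivity), mul_assoc, ← Real.mul_rpow (by norm_num) hℓ.le]
  exact mul_le_mul_of_nonneg_left
    (Real.rpow_le_rpow_of_nonpos (by positivity) hk (by linarith)) two_pos.le
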